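/- The map Φ₃(A,B) = tr(A+B) − 2 tr(A # B) on pairs of positive definite matrices satisfies Φ₃(A,B) ≥ 0 with equality if and only if A = B. -/

import Mathlib

/-!
Write `S = A^{1/2}` and `T = (S⁻¹ B S⁻¹)^{1/2}`, so that `A = S²`, `B = S T² S` and `A # B = S T S`.
Then `A + B - 2 (A # B) = S (1 - T)² S = Mᴴ M` with `M = (1 - T) S`, whose trace is `≥ 0` and
vanishes only when `M = 0`, i.e. `T = 1`, i.e. `B = A`.
-/

open scoped ComplexOrder
open MeasureTheory

/-- The positive semidefinite square root of a matrix (zero if not positive semidefinite). -/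
noncomputable def msqrt {N : ℕ} (A : Matrix (Fin N) (Fin N) ℂ) : Matrix (Fin N) (Fin N) ℂ :=
  by classical exact if h : A.PosSemidef then
    (h.1.eigenvectorUnitary.1 * Matrix.diagonal ((↑) ∘ (√·) ∘ h.1.eigenvalues) *
      (star h.1.eigenvectorUnitary : Matrix (Fin N) (Fin N) ℂ)) else 0

/-- The Pusz–Woronowicz geometric mean `A # B = A^{1/2} (A^{-1/2} B A^{-1/2})^{1/2} A^{1/2}`. -/
noncomputable def geom {N : ℕ} (A B : Matrix (Fin N) (Fin N) ℂ) : Matrix (Fin N) (Fin N) ℂ :=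
  msqrt A * msqrt ((msqrt A)⁻¹ * B * (msqrt A)⁻¹) * msqrt A

/-- The logarithm of a Hermitian matrix, via the spectral theorem (zero if not Hermitian). -/
noncomputable def mlog {N : ℕ} (A : Matrix (Fin N) (Fin N) ℂ) : Matrix (Fin N) (Fin N) ℂ :=
  by classical exact if h : A.IsHermitian then h.cfc Real.log else 0

/-- The log Euclidean mean `exp((log A + log B)/2)`. -/
noncomputable def logEuclid {N : ℕ} (A B : Matrix (Fin N) (Fin N) ℂ) : Matrix (Fin N) (Fin N) ℂ :=
  NormedSpace.exp ((2:ℂ)⁻¹ • (mlog A + mlog B))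

open scoped MatrixOrder
open Matrix

lemma star_mul_self_one_sub_mul {R : Type*} [Ring R] [StarRing R] {s t : R}
    (hs : IsSelfAdjoint s) (ht : IsSelfAdjoint t) :
    star ((1 - t) * s) * ((1 - t) * s) = s * s + s * (t * t) * s - s * t * s - s * t * s := by
  rw [star_mul, star_sub, star_one, hs.star_eq, ht.star_eq]
  noncomm_ring

section msqrt

variable {N : ℕ} {A : Matrix (Fin N) (Fin N) ℂ}

lemma msqrt_eq_cfcSqrt (hA : A.PosSemidef) : msqrt A = CFC.sqrt A := by
  unfold msqrt
  rw [dif_pos hA, CFC.sqrt_eq_cfc, cfc_nnreal_eq_real _ A, hA.1.cfc_eq]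
  simp only [IsHermitian.cfc, Unitary.conjStarAlgAut_apply]
  congr 3
  funext i
  simp [Real.coe_sqrt, max_eq_left (hA.eigenvalues_nonneg i)]

lemma Matrix.PosSemidef.msqrt (hA : A.PosSemidef) : (msqrt A).PosSemidef := by
  rw [msqrt_eq_cfcSqrt hA]
  exact nonneg_iff_posSemidef.mp (CFC.sqrt_nonneg A)

lemma msqrt_mul_self (hA : A.PosSemidef) : msqrt A * msqrt A = A := by
  rw [msqrt_eq_cfcSqrt hA]
  exact CFC.sqrt_mul_sqrt_self A hA.nonneg

lemma msqrt_one : msqrt (1 : Matrix (Fin N) (Fin N) ℂ) = 1 := by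
  rw [msqrt_eq_cfcSqrt PosSemidef.one, CFC.sqrt_one]

lemma isUnit_msqrt (hA : A.PosDef) : IsUnit (msqrt A) :=
  isUnit_of_mul_isUnit_left (msqrt_mul_self hA.posSemidef ▸ hA.isUnit)

end msqrt

/-- The matrix `M = (1 - T) S` of the header, with `Mᴴ M = A + B - 2 (A # B)`. -/
noncomputable def geomDefect {N : ℕ} (A B : Matrix (Fin N) (Fin N) ℂ) : Matrix (Fin N) (Fin N) ℂ :=
  (1 - msqrt ((msqrt A)⁻¹ * B * (msqrt A)⁻¹)) * msqrt A

section geomDefect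

variable {N : ℕ} {A B : Matrix (Fin N) (Fin N) ℂ} (hA : A.PosDef) (hB : B.PosSemidef)
include hA hB

lemma posSemidef_msqrt_inv_mul_mul_msqrt_inv : ((msqrt A)⁻¹ * B * (msqrt A)⁻¹).PosSemidef := by
  have h := hB.conjTranspose_mul_mul_same (msqrt A)⁻¹
  rwa [hA.posSemidef.msqrt.1.inv] at h

lemma msqrt_mul_msqrt_conj_mul_self_mul_msqrt :
    msqrt A * (msqrt ((msqrt A)⁻¹ * B * (msqrt A)⁻¹) * msqrt ((msqrt A)⁻¹ * B * (msqrt A)⁻¹)) *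
      msqrt A = B := by
  have hS := (isUnit_iff_isUnit_det _).mp (isUnit_msqrt hA)
  rw [msqrt_mul_self (posSemidef_msqrt_inv_mul_mul_msqrt_inv hA hB), ← mul_assoc,
    mul_nonsing_inv_cancel_left _ _ hS, nonsing_inv_mul_cancel_right _ _ hS]

lemma trace_add_sub_two_mul_trace_geom :
    (A + B).trace - 2 * (geom A B).trace = ((geomDefect A B)ᴴ * geomDefect A B).trace := by
  have hS : IsSelfAdjoint (msqrt A) := hA.posSemidef.msqrt.1
  have hT := (posSemidef_msqrt_inv_mul_mul_msqrt_inv hA hB).msqrt.1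
  rw [geomDefect, ← star_eq_conjTranspose, star_mul_self_one_sub_mul hS hT,
    msqrt_mul_msqrt_conj_mul_self_mul_msqrt hA hB, msqrt_mul_self hA.posSemidef, geom]
  simp only [trace_sub, trace_add]
  ring

lemma geomDefect_eq_zero_iff : geomDefect A B = 0 ↔ A = B := by
  rw [geomDefect, (isUnit_msqrt hA).mul_left_eq_zero, sub_eq_zero, eq_comm]
  constructor
  · intro hT
    rw [← msqrt_mul_msqrt_conj_mul_self_mul_msqrt hA hB, hT, one_mul, mul_one,
      msqrt_mul_self hA.posSemidef]
  · rintro rfl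
    have hS := (isUnit_iff_isUnit_det _).mp (isUnit_msqrt hA)
    have hC : (msqrt A)⁻¹ * (msqrt A * msqrt A) * (msqrt A)⁻¹ = 1 := by
      rw [← mul_assoc, nonsing_inv_mul _ hS, one_mul, mul_nonsing_inv _ hS]
    rw [msqrt_mul_self hA.posSemidef] at hC
    rw [hC, msqrt_one]

end geomDefect

theorem stmt4 {N : ℕ} (A B : Matrix (Fin N) (Fin N) ℂ) (hA : A.PosDef) (hB : B.PosDef) :
    0 ≤ (A + B).trace - 2 * (geom A B).trace ∧
    ((A + B).trace - 2 * (geom A B).trace = 0 ↔ A = B) := by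
  rw [trace_add_sub_two_mul_trace_geom hA hB.posSemidef, trace_conjTranspose_mul_self_eq_zero_iff,
    geomDefect_eq_zero_iff hA hB.posSemidef]
  exact ⟨(posSemidef_conjTranspose_mul_self _).trace_nonneg, Iff.rfl⟩
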